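/- arXiv:1510.05239 — 4 statements merged into one kernel-verified Lean document; each statement's English description precedes it below -/
import Mathlib

section
/- Let μ₀ be a probability measure on X and Φ, Φ_N, R, R_N : X → ℝ nonnegative measurable functions. Let Z = ∫ exp(-Φ - R) dμ₀ and Z_N = ∫ exp(-Φ_N - R_N) dμ₀. Suppose X_ε ⊆ X is measurable with μ₀(X_ε) ≥ 1 - ε, |Φ(u) - Φ_N(u)| ≤ a for u ∈ X_ε, and |R(u) - R_N(u)| ≤ b for u ∈ X_ε. Then |Z - Z_N| ≤ ε + a + b. -/
/-! Since `Φ, R ≥ 0`, the integrands `exp (-(Φ + R))` take values in `(0, 1]`, and `t ↦ exp (-t)`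
is `1`-Lipschitz on `[0, ∞)`. Hence their difference is at most `a + b` on `Xε` and at most `1` on
its complement, whose mass is at most `ε`. -/

open MeasureTheory Real

lemma abs_exp_neg_sub_exp_neg_le_min {x y : ℝ} (hx : 0 ≤ x) (hy : 0 ≤ y) :
    |exp (-x) - exp (-y)| ≤ min 1 |x - y| := by
  wlog hxy : x ≤ y generalizing x y
  · rw [abs_sub_comm, abs_sub_comm x]
    exact this hy hx (le_of_not_ge hxy)
  have hdecay : exp (-y) ≤ exp (-x) := exp_le_exp.2 (neg_le_neg hxy)
  rw [abs_of_nonneg (sub_nonneg.2 hdecay), abs_of_nonpos (sub_nonpos.2 hxy), neg_sub]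
  refine le_min (by linarith [exp_pos (-y), exp_le_one_iff.2 (neg_nonpos.2 hx)]) ?_
  have hfactor : exp (-x) - exp (-y) = exp (-x) * (1 - exp (-(y - x))) := by
    rw [mul_sub, mul_one, ← exp_add]; ring_nf
  rw [hfactor]
  calc exp (-x) * (1 - exp (-(y - x))) ≤ 1 * (y - x) :=
        mul_le_mul (exp_le_one_iff.2 (neg_nonpos.2 hx))
          (by linarith [one_sub_le_exp_neg (y - x)])
          (by linarith [exp_le_one_iff.2 (neg_nonpos.2 (sub_nonneg.2 hxy))]) zero_le_one
    _ = y - x := one_mul _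

section

variable {X : Type*} [MeasurableSpace X] {μ : Measure X}

lemma integrable_exp_neg_of_nonneg [IsFiniteMeasure μ] {ψ : X → ℝ} (hψ : Measurable ψ)
    (hψ0 : ∀ x, 0 ≤ ψ x) : Integrable (fun x => exp (-ψ x)) μ :=
  Integrable.of_bound hψ.neg.exp.aestronglyMeasurable 1 (Filter.Eventually.of_forall fun x => by
    rw [norm_of_nonneg (exp_pos _).le]
    exact exp_le_one_iff.2 (neg_nonpos.2 (hψ0 x)))

lemma abs_integral_sub_integral_le_of_abs_sub_le [IsFiniteMeasure μ] {f g : X → ℝ}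
    (hf : Integrable f μ) (hg : Integrable g μ) {S : Set X} (hS : MeasurableSet S) {c d : ℝ}
    (hc : ∀ x ∈ S, |f x - g x| ≤ c) (hd : ∀ x ∈ Sᶜ, |f x - g x| ≤ d) :
    |∫ x, f x ∂μ - ∫ x, g x ∂μ| ≤ c * μ.real S + d * μ.real Sᶜ := by
  rw [← integral_sub hf hg, ← integral_add_compl (f := fun x => f x - g x) hS (hf.sub hg)]
  exact (abs_add_le _ _).trans (add_le_add
    (norm_setIntegral_le_of_norm_le_const (f := fun x => f x - g x) (measure_lt_top μ S) hc)
    (norm_setIntegral_le_of_norm_le_const (f := fun x => f x - g x) (measure_lt_top μ Sᶜ) hd))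

lemma measureReal_compl_le_of_ofReal_one_sub_le [IsProbabilityMeasure μ] {S : Set X}
    (hS : MeasurableSet S) {ε : ℝ} (h : ENNReal.ofReal (1 - ε) ≤ μ S) : μ.real Sᶜ ≤ ε := by
  rw [probReal_compl_eq_one_sub hS, measureReal_def]
  linarith [(ENNReal.ofReal_le_iff_le_toReal (measure_ne_top μ S)).1 h]

end

theorem normalization_constants_close_general
    {X : Type*} [MeasurableSpace X]
    (μ₀ : Measure X) [IsProbabilityMeasure μ₀]
    (Φ ΦN R RN : X → ℝ)
    (hΦm : Measurable Φ) (hΦNm : Measurable ΦN)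
    (hRm : Measurable R) (hRNm : Measurable RN)
    (hΦ0 : ∀ u, 0 ≤ Φ u) (hΦN0 : ∀ u, 0 ≤ ΦN u)
    (hR0 : ∀ u, 0 ≤ R u) (hRN0 : ∀ u, 0 ≤ RN u)
    (ε a b : ℝ) (ha : 0 ≤ a) (hb : 0 ≤ b)
    (Xε : Set X) (hXεm : MeasurableSet Xε)
    (hXε : ENNReal.ofReal (1 - ε) ≤ μ₀ Xε)
    (hΦa : ∀ u ∈ Xε, |Φ u - ΦN u| ≤ a)
    (hRb : ∀ u ∈ Xε, |R u - RN u| ≤ b) :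
    |(∫ u, Real.exp (-(Φ u) - R u) ∂μ₀) - ∫ u, Real.exp (-(ΦN u) - RN u) ∂μ₀|
      ≤ ε + a + b := by
  simp only [← neg_add']
  have hclose : ∀ u ∈ Xε, |(Φ u + R u) - (ΦN u + RN u)| ≤ a + b := fun u hu =>
    (add_sub_add_comm (Φ u) (R u) (ΦN u) (RN u)).symm ▸
      (abs_add_le _ _).trans (add_le_add (hΦa u hu) (hRb u hu))
  have hexp := fun u => abs_exp_neg_sub_exp_neg_le_min (add_nonneg (hΦ0 u) (hR0 u))
    (add_nonneg (hΦN0 u) (hRN0 u))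
  calc _ ≤ (a + b) * μ₀.real Xε + 1 * μ₀.real Xεᶜ :=
        abs_integral_sub_integral_le_of_abs_sub_le
          (integrable_exp_neg_of_nonneg (hΦm.add hRm) fun u => add_nonneg (hΦ0 u) (hR0 u))
          (integrable_exp_neg_of_nonneg (hΦNm.add hRNm) fun u => add_nonneg (hΦN0 u) (hRN0 u))
          hXεm (fun u hu => (hexp u).trans ((min_le_right _ _).trans (hclose u hu)))
          (fun u _ => (hexp u).trans (min_le_left _ _))
    _ ≤ (a + b) * 1 + 1 * ε := by
        gcongr
        · exact measureReal_le_one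
        · exact measureReal_compl_le_of_ofReal_one_sub_le hXεm hXε
    _ = ε + a + b := by ring

theorem normalization_constants_close
    {X : Type*} [MeasurableSpace X]
    (μ₀ : Measure X) [IsProbabilityMeasure μ₀]
    (Φ ΦN R RN : X → ℝ)
    (hΦm : Measurable Φ) (hΦNm : Measurable ΦN)
    (hRm : Measurable R) (hRNm : Measurable RN)
    (hΦ0 : ∀ u, 0 ≤ Φ u) (hΦN0 : ∀ u, 0 ≤ ΦN u)
    (hR0 : ∀ u, 0 ≤ R u) (hRN0 : ∀ u, 0 ≤ RN u)
    (ε a b : ℝ) (hε : 0 ≤ ε) (ha : 0 ≤ a) (hb : 0 ≤ b)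
    (Xε : Set X) (hXεm : MeasurableSet Xε)
    (hXε : ENNReal.ofReal (1 - ε) ≤ μ₀ Xε)
    (hΦa : ∀ u ∈ Xε, |Φ u - ΦN u| ≤ a)
    (hRb : ∀ u ∈ Xε, |R u - RN u| ≤ b) :
    |(∫ u, Real.exp (-(Φ u) - R u) ∂μ₀) - ∫ u, Real.exp (-(ΦN u) - RN u) ∂μ₀|
      ≤ ε + a + b :=
  normalization_constants_close_general μ₀ Φ ΦN R RN hΦm hΦNm hRm hRNm hΦ0 hΦN0 hR0 hRN0 ε a b ha hb
    Xε hXεm hXε hΦa hRb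
end

section
/- Let μ₀ be a probability measure on X and Φ, R : X → ℝ nonnegative measurable functions, with Z = ∫ exp(-Φ - R) dμ₀ > 0. For sequences Φ_N, R_N of nonnegative measurable functions with normalization constants Z_N ≥ C > 0 uniformly in N, Z ≥ C, suppose for every ε > 0 there exist sequences a_N(ε), b_N(ε) → 0 such that the set X_ε = {u : |Φ(u) - Φ_N(u)| ≤ a_N(ε) and |R(u) - R_N(u)| ≤ b_N(ε)} satisfies μ₀(X_ε) ≥ 1 - ε for all N. Then the Hellinger distance between the measures μ (with density exp(-Φ-R)/Z w.r.t. μ₀) and μ_N (with density exp(-Φ_N-R_N)/Z_N w.r.t. μ₀) tends to 0 as N → ∞. -/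
open MeasureTheory Real Filter

/-!
Write `f = exp(-Φ-R)` and `g_N = exp(-Φ_N-R_N)`. Since all potentials are nonnegative, `t ↦ exp(-t)`
is 1-Lipschitz where it is evaluated, so `|f - g_N| ≤ a_N(ε) + b_N(ε)` off a set of measure at most
`ε`; as `|f - g_N| ≤ 1`, this gives `g_N → f` in `L¹` and in particular `Z_N → Z`. Splitting
`√(f/Z) - √(g_N/Z_N) = (√f - √g_N)/√Z + √g_N (Z^{-1/2} - Z_N^{-1/2})` and using
`(√a - √b)² ≤ |a - b|` bounds the squared Hellinger distance by
`‖f - g_N‖₁ / Z + Z_N (Z^{-1/2} - Z_N^{-1/2})²`, which tends to `0`.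
-/

lemma abs_exp_neg_sub_exp_neg_le {x y : ℝ} (hx : 0 ≤ x) (hy : 0 ≤ y) :
    |exp (-x) - exp (-y)| ≤ |x - y| := by
  wlog hxy : x ≤ y generalizing x y
  · rw [abs_sub_comm, abs_sub_comm x]
    exact this hy hx (le_of_not_ge hxy)
  have hexp : exp (-y) = exp (-x) * exp (-(y - x)) := by rw [← exp_add]; ring_nf
  have hgap : 1 - (y - x) ≤ exp (-(y - x)) := one_sub_le_exp_neg _
  have hx1 : exp (-x) ≤ 1 := exp_le_one_iff.2 (by linarith)
  rw [abs_of_nonneg (sub_nonneg.2 (exp_le_exp.2 (neg_le_neg hxy))), abs_of_nonpos (by linarith)]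
  nlinarith [exp_pos (-x)]

lemma sq_sqrt_sub_sqrt_le_abs_sub {a b : ℝ} (ha : 0 ≤ a) (hb : 0 ≤ b) :
    (√a - √b) ^ 2 ≤ |a - b| := by
  have hsa := sqrt_nonneg a
  have hsb := sqrt_nonneg b
  have hab : a - b = (√a - √b) * (√a + √b) := by
    rw [← sq_sqrt ha, ← sq_sqrt hb]; simp only [sqrt_sq hsa, sqrt_sq hsb]; ring
  calc (√a - √b) ^ 2 = |√a - √b| * |√a - √b| := by rw [sq, abs_mul_abs_self]
    _ ≤ |√a - √b| * (√a + √b) :=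
      mul_le_mul_of_nonneg_left (abs_sub_le_iff.2 ⟨by linarith, by linarith⟩) (abs_nonneg _)
    _ = |a - b| := by rw [hab, abs_mul, abs_of_nonneg (add_nonneg hsa hsb)]

lemma sq_sqrt_div_sub_sqrt_div_le {a b Z Z' : ℝ} (ha : 0 ≤ a) (hb : 0 ≤ b) (hZ : 0 ≤ Z) :
    (√(a / Z) - √(b / Z')) ^ 2 ≤ 2 / Z * |a - b| + 2 * (1 / √Z - 1 / √Z') ^ 2 * b := by
  have hsplit : √(a / Z) - √(b / Z') = (√a - √b) * (1 / √Z) + √b * (1 / √Z - 1 / √Z') := by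
    rw [sqrt_div ha, sqrt_div hb]; ring
  calc (√(a / Z) - √(b / Z')) ^ 2
      ≤ 2 * (((√a - √b) * (1 / √Z)) ^ 2 + (√b * (1 / √Z - 1 / √Z')) ^ 2) := hsplit ▸ add_sq_le
    _ = 2 / Z * (√a - √b) ^ 2 + 2 * (1 / √Z - 1 / √Z') ^ 2 * b := by
      rw [mul_pow, mul_pow, div_pow, sq_sqrt hZ, sq_sqrt hb]; ring
    _ ≤ 2 / Z * |a - b| + 2 * (1 / √Z - 1 / √Z') ^ 2 * b := by
      gcongr; exact sq_sqrt_sub_sqrt_le_abs_sub ha hb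

lemma tendsto_zero_of_forall_le_add {u : ℕ → ℝ} (hu : ∀ N, 0 ≤ u N)
    (h : ∀ ε > 0, ∃ v : ℕ → ℝ, Tendsto v atTop (nhds 0) ∧ ∀ N, u N ≤ v N + ε) :
    Tendsto u atTop (nhds 0) := by
  refine tendsto_order.2
    ⟨fun c hc => Eventually.of_forall fun N => hc.trans_le (hu N), fun c hc => ?_⟩
  obtain ⟨v, hv, huv⟩ := h (c / 2) (half_pos hc)
  filter_upwards [(tendsto_order.1 hv).2 (c / 2) (half_pos hc)] with N hN
  linarith [huv N]

section
variable {X : Type*} [MeasurableSpace X] {μ : Measure X}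

lemma integrable_exp_neg [IsFiniteMeasure μ] {s : X → ℝ} (hs : Measurable s) (hs0 : ∀ u, 0 ≤ s u) :
    Integrable (fun u => exp (-s u)) μ :=
  Integrable.of_bound hs.neg.exp.aestronglyMeasurable 1 (Eventually.of_forall fun u => by
    rw [norm_of_nonneg (exp_pos _).le]; exact exp_le_one_iff.2 (neg_nonpos.2 (hs0 u)))

lemma measure_compl_le_of_ofReal_one_sub_le [IsProbabilityMeasure μ] {A : Set X} {ε : ℝ}
    (hA : MeasurableSet A) (h : ENNReal.ofReal (1 - ε) ≤ μ A) : μ Aᶜ ≤ ENNReal.ofReal ε := by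
  rw [prob_compl_eq_one_sub hA, tsub_le_iff_right]
  calc (1 : ENNReal) = ENNReal.ofReal (ε + (1 - ε)) := by simp
    _ ≤ ENNReal.ofReal ε + ENNReal.ofReal (1 - ε) := ENNReal.ofReal_add_le
    _ ≤ ENNReal.ofReal ε + μ A := by gcongr

lemma integral_le_add_mul_of_le_on_of_measure_compl_le [IsProbabilityMeasure μ] {F : X → ℝ}
    {A : Set X} {η M ε : ℝ} (hF : Integrable F μ) (hA : MeasurableSet A) (hη : 0 ≤ η)
    (hM : 0 ≤ M) (hε : 0 ≤ ε) (hFA : ∀ u ∈ A, F u ≤ η) (hFM : ∀ u, F u ≤ M)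
    (hAc : μ Aᶜ ≤ ENNReal.ofReal ε) :
    ∫ u, F u ∂μ ≤ η + M * ε := by
  have hin : ∫ u in A, F u ∂μ ≤ η := calc
    ∫ u in A, F u ∂μ ≤ ∫ _ in A, η ∂μ :=
      setIntegral_mono_on hF.integrableOn (integrableOn_const ..) hA hFA
    _ = μ.real A * η := by rw [setIntegral_const, smul_eq_mul]
    _ ≤ η := mul_le_of_le_one_left hη measureReal_le_one
  have hout : ∫ u in Aᶜ, F u ∂μ ≤ M * ε := calc
    ∫ u in Aᶜ, F u ∂μ ≤ ∫ _ in Aᶜ, M ∂μ :=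
      setIntegral_mono_on hF.integrableOn (integrableOn_const ..) hA.compl fun u _ => hFM u
    _ = μ.real Aᶜ * M := by rw [setIntegral_const, smul_eq_mul]
    _ ≤ ε * M := mul_le_mul_of_nonneg_right (ENNReal.toReal_le_of_le_ofReal hε hAc) hM
    _ = M * ε := mul_comm _ _
  rw [← integral_add_compl hA hF]
  exact add_le_add hin hout

lemma tendsto_integral_of_le_on_large_sets [IsProbabilityMeasure μ] {F : ℕ → X → ℝ} {M : ℝ}
    (hF : ∀ N, Integrable (F N) μ) (hF0 : ∀ N u, 0 ≤ F N u) (hFM : ∀ N u, F N u ≤ M)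
    (hsmall : ∀ ε > 0, ∃ η : ℕ → ℝ, Tendsto η atTop (nhds 0) ∧ ∀ N, 0 ≤ η N ∧
      ∃ A, MeasurableSet A ∧ ENNReal.ofReal (1 - ε) ≤ μ A ∧ ∀ u ∈ A, F N u ≤ η N) :
    Tendsto (fun N => ∫ u, F N u ∂μ) atTop (nhds 0) := by
  obtain ⟨u₀⟩ := nonempty_of_isProbabilityMeasure μ
  have hM : 0 ≤ M := (hF0 0 u₀).trans (hFM 0 u₀)
  refine tendsto_zero_of_forall_le_add (fun N => integral_nonneg (hF0 N)) fun δ hδ => ?_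
  obtain ⟨η, hη, hA⟩ := hsmall (δ / (M + 1)) (by positivity)
  refine ⟨η, hη, fun N => ?_⟩
  obtain ⟨hη0, A, hAm, hAμ, hFA⟩ := hA N
  calc ∫ u, F N u ∂μ ≤ η N + M * (δ / (M + 1)) :=
        integral_le_add_mul_of_le_on_of_measure_compl_le (hF N) hAm hη0 hM (by positivity) hFA
          (hFM N) (measure_compl_le_of_ofReal_one_sub_le hAm hAμ)
    _ ≤ η N + δ := by
        gcongr
        rw [mul_div_assoc', div_le_iff₀ (by positivity)]
        nlinarith

lemma tendsto_integral_abs_exp_neg_sub_exp_neg [IsProbabilityMeasure μ] {s : X → ℝ}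
    {sN : ℕ → X → ℝ} (hs : Measurable s) (hsN : ∀ N, Measurable (sN N)) (hs0 : ∀ u, 0 ≤ s u)
    (hsN0 : ∀ N u, 0 ≤ sN N u)
    (happrox : ∀ ε > 0, ∃ η : ℕ → ℝ, Tendsto η atTop (nhds 0) ∧ ∀ N, 0 ≤ η N ∧
      ∃ A, MeasurableSet A ∧ ENNReal.ofReal (1 - ε) ≤ μ A ∧ ∀ u ∈ A, |s u - sN N u| ≤ η N) :
    Tendsto (fun N => ∫ u, |exp (-s u) - exp (-sN N u)| ∂μ) atTop (nhds 0) := by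
  have hexp_mem : ∀ t, 0 ≤ t → 0 ≤ exp (-t) ∧ exp (-t) ≤ 1 := fun t ht =>
    ⟨(exp_pos _).le, exp_le_one_iff.2 (neg_nonpos.2 ht)⟩
  refine tendsto_integral_of_le_on_large_sets (M := 1)
    (fun N => ((integrable_exp_neg hs hs0).sub (integrable_exp_neg (hsN N) (hsN0 N))).abs)
    (fun N u => abs_nonneg _) (fun N u => ?_) fun ε hε => ?_
  · obtain ⟨h0, h1⟩ := hexp_mem _ (hs0 u)
    obtain ⟨h0', h1'⟩ := hexp_mem _ (hsN0 N u)
    simpa using abs_sub_le_of_le_of_le h0 h1 h0' h1'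
  · obtain ⟨η, hη, hA⟩ := happrox ε hε
    refine ⟨η, hη, fun N => ?_⟩
    obtain ⟨hη0, A, hAm, hAμ, hsA⟩ := hA N
    exact ⟨hη0, A, hAm, hAμ, fun u hu =>
      (abs_exp_neg_sub_exp_neg_le (hs0 u) (hsN0 N u)).trans (hsA u hu)⟩

lemma integral_sq_sqrt_div_sub_sqrt_div_le {f g : X → ℝ} (hf : Integrable f μ)
    (hg : Integrable g μ) (hf0 : ∀ u, 0 ≤ f u) (hg0 : ∀ u, 0 ≤ g u) {Z : ℝ} (hZ : 0 ≤ Z)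
    (Z' : ℝ) :
    ∫ u, (√(f u / Z) - √(g u / Z')) ^ 2 ∂μ ≤
      2 / Z * ∫ u, |f u - g u| ∂μ + 2 * (1 / √Z - 1 / √Z') ^ 2 * ∫ u, g u ∂μ := by
  have hfg : Integrable (fun u => |f u - g u|) μ := (hf.sub hg).abs
  rw [← integral_const_mul, ← integral_const_mul, ← integral_add (hfg.const_mul _) (hg.const_mul _)]
  exact integral_mono_of_nonneg (Eventually.of_forall fun u => sq_nonneg _)
    ((hfg.const_mul _).add (hg.const_mul _))
    (Eventually.of_forall fun u => sq_sqrt_div_sub_sqrt_div_le (hf0 u) (hg0 u) hZ)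

lemma tendsto_integral_of_tendsto_integral_abs_sub {f : X → ℝ} {g : ℕ → X → ℝ}
    (hf : Integrable f μ) (hg : ∀ N, Integrable (g N) μ)
    (h : Tendsto (fun N => ∫ u, |f u - g N u| ∂μ) atTop (nhds 0)) :
    Tendsto (fun N => ∫ u, g N u ∂μ) atTop (nhds (∫ u, f u ∂μ)) := by
  refine tendsto_iff_norm_sub_tendsto_zero.2 <| squeeze_zero (fun _ => norm_nonneg _)
    (fun N => ?_) h
  rw [norm_eq_abs, abs_sub_comm, ← integral_sub hf (hg N)]
  exact abs_integral_le_integral_abs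

lemma tendsto_integral_sq_sqrt_div_integral_sub {f : X → ℝ} {g : ℕ → X → ℝ}
    (hf : Integrable f μ) (hg : ∀ N, Integrable (g N) μ) (hf0 : ∀ u, 0 ≤ f u)
    (hg0 : ∀ N u, 0 ≤ g N u) (hZ : 0 < ∫ u, f u ∂μ)
    (h : Tendsto (fun N => ∫ u, |f u - g N u| ∂μ) atTop (nhds 0)) :
    Tendsto (fun N => ∫ u, (√(f u / ∫ v, f v ∂μ) - √(g N u / ∫ v, g N v ∂μ)) ^ 2 ∂μ)
      atTop (nhds 0) := by
  set Z := ∫ v, f v ∂μ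
  set ZN := fun N => ∫ v, g N v ∂μ
  have hZN : Tendsto ZN atTop (nhds Z) := tendsto_integral_of_tendsto_integral_abs_sub hf hg h
  have hinv : Tendsto (fun N => 1 / √(ZN N)) atTop (nhds (1 / √Z)) :=
    tendsto_const_nhds.div ((continuous_sqrt.tendsto Z).comp hZN) (sqrt_pos.2 hZ).ne'
  have hbound : Tendsto (fun N => 2 / Z * ∫ u, |f u - g N u| ∂μ
      + 2 * (1 / √Z - 1 / √(ZN N)) ^ 2 * ZN N) atTop (nhds 0) := by
    simpa using (h.const_mul (2 / Z)).add
      ((((tendsto_const_nhds (x := 1 / √Z)).sub hinv).pow 2).const_mul 2 |>.mul hZN)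
  exact squeeze_zero (fun N => integral_nonneg fun u => sq_nonneg _)
    (fun N => integral_sq_sqrt_div_sub_sqrt_div_le hf (hg N) hf0 (hg0 N) hZ.le (ZN N)) hbound

end

theorem hellinger_distance_tendsto_zero_general
    {X : Type*} [MeasurableSpace X]
    (μ₀ : Measure X) [IsProbabilityMeasure μ₀]
    (Φ R : X → ℝ) (ΦN RN : ℕ → X → ℝ)
    (hΦm : Measurable Φ) (hRm : Measurable R)
    (hΦNm : ∀ N, Measurable (ΦN N)) (hRNm : ∀ N, Measurable (RN N))
    (hΦ0 : ∀ u, 0 ≤ Φ u) (hR0 : ∀ u, 0 ≤ R u)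
    (hΦN0 : ∀ N u, 0 ≤ ΦN N u) (hRN0 : ∀ N u, 0 ≤ RN N u)
    (Z : ℝ) (ZN : ℕ → ℝ)
    (hZ : Z = ∫ u, Real.exp (-(Φ u) - R u) ∂μ₀)
    (hZN : ∀ N, ZN N = ∫ u, Real.exp (-(ΦN N u) - RN N u) ∂μ₀)
    (happrox : ∀ ε > (0 : ℝ), ∃ a b : ℕ → ℝ,
      Tendsto a atTop (nhds 0) ∧ Tendsto b atTop (nhds 0) ∧
      (∀ N, 0 ≤ a N ∧ 0 ≤ b N) ∧
      ∀ N, ENNReal.ofReal (1 - ε) ≤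
        μ₀ {u : X | |Φ u - ΦN N u| ≤ a N ∧ |R u - RN N u| ≤ b N}) :
    Tendsto (fun N => Real.sqrt ((1 / 2) *
        ∫ u, (Real.sqrt (Real.exp (-(Φ u) - R u) / Z)
            - Real.sqrt (Real.exp (-(ΦN N u) - RN N u) / ZN N)) ^ 2 ∂μ₀))
      atTop (nhds 0) := by
  simp only [← neg_add'] at hZ hZN ⊢
  subst hZ
  simp only [hZN]
  have hs0 : ∀ u, 0 ≤ Φ u + R u := fun u => add_nonneg (hΦ0 u) (hR0 u)
  have hsN0 : ∀ N u, 0 ≤ ΦN N u + RN N u := fun N u => add_nonneg (hΦN0 N u) (hRN0 N u)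
  have hf : Integrable (fun u => exp (-(Φ u + R u))) μ₀ := integrable_exp_neg (hΦm.add hRm) hs0
  have hg (N : ℕ) : Integrable (fun u => exp (-(ΦN N u + RN N u))) μ₀ :=
    integrable_exp_neg ((hΦNm N).add (hRNm N)) (hsN0 N)
  have hL1 : Tendsto (fun N => ∫ u, |exp (-(Φ u + R u)) - exp (-(ΦN N u + RN N u))| ∂μ₀)
      atTop (nhds 0) := by
    refine tendsto_integral_abs_exp_neg_sub_exp_neg (hΦm.add hRm)
      (fun N => (hΦNm N).add (hRNm N)) hs0 hsN0 fun ε hε => ?_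
    obtain ⟨a, b, ha, hb, hab0, hμ⟩ := happrox ε hε
    refine ⟨fun N => a N + b N, by simpa using ha.add hb, fun N =>
      ⟨add_nonneg (hab0 N).1 (hab0 N).2, _, ?_, hμ N, fun u hu => ?_⟩⟩
    · exact (measurableSet_le ((hΦm.sub (hΦNm N)).abs) measurable_const).inter
        (measurableSet_le ((hRm.sub (hRNm N)).abs) measurable_const)
    · rw [add_sub_add_comm]
      exact (abs_add_le _ _).trans (add_le_add hu.1 hu.2)
  have hI := tendsto_integral_sq_sqrt_div_integral_sub hf hg (fun u => (exp_pos _).le)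
    (fun N u => (exp_pos _).le) (integral_exp_pos hf) hL1
  simpa only [mul_zero, sqrt_zero] using (hI.const_mul (1 / 2)).sqrt

theorem hellinger_distance_tendsto_zero
    {X : Type*} [MeasurableSpace X]
    (μ₀ : Measure X) [IsProbabilityMeasure μ₀]
    (Φ R : X → ℝ) (ΦN RN : ℕ → X → ℝ)
    (hΦm : Measurable Φ) (hRm : Measurable R)
    (hΦNm : ∀ N, Measurable (ΦN N)) (hRNm : ∀ N, Measurable (RN N))
    (hΦ0 : ∀ u, 0 ≤ Φ u) (hR0 : ∀ u, 0 ≤ R u)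
    (hΦN0 : ∀ N u, 0 ≤ ΦN N u) (hRN0 : ∀ N u, 0 ≤ RN N u)
    (Z : ℝ) (ZN : ℕ → ℝ) (C : ℝ) (hC : 0 < C)
    (hZ : Z = ∫ u, Real.exp (-(Φ u) - R u) ∂μ₀)
    (hZN : ∀ N, ZN N = ∫ u, Real.exp (-(ΦN N u) - RN N u) ∂μ₀)
    (hZC : C ≤ Z) (hZNC : ∀ N, C ≤ ZN N)
    (happrox : ∀ ε > (0 : ℝ), ∃ a b : ℕ → ℝ,
      Tendsto a atTop (nhds 0) ∧ Tendsto b atTop (nhds 0) ∧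
      (∀ N, 0 ≤ a N ∧ 0 ≤ b N) ∧
      ∀ N, ENNReal.ofReal (1 - ε) ≤
        μ₀ {u : X | |Φ u - ΦN N u| ≤ a N ∧ |R u - RN N u| ≤ b N}) :
    Tendsto (fun N => Real.sqrt ((1 / 2) *
        ∫ u, (Real.sqrt (Real.exp (-(Φ u) - R u) / Z)
            - Real.sqrt (Real.exp (-(ΦN N u) - RN N u) / ZN N)) ^ 2 ∂μ₀))
      atTop (nhds 0) :=
  hellinger_distance_tendsto_zero_general μ₀ Φ R ΦN RN hΦm hRm hΦNm hRNm hΦ0 hR0 hΦN0 hRN0 Z ZN hZ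
    hZN happrox
end

section
/- Let p be a probability density on a measurable state space S, q(u, ·) a proposal transition density, and define the Metropolis–Hastings acceptance probability acc(u, v) = min{1, (p(v) q(v, u)) / (p(u) q(u, v))}. Then the Metropolis–Hastings transition kernel Q(u, dv) = acc(u, v) q(u, v) dv + δ_u(dv)(1 - ∫ acc(u, z) q(u, z) dz) satisfies detailed balance with respect to p: p(u) Q(u, dv) = p(v) Q(v, du) as measures on S × S. -/
open MeasureTheory

theorem mh_min_symm (a b : ℝ) (ha : 0 ≤ a) (hb : 0 ≤ b) :
    a * min 1 (b / a) = b * min 1 (a / b) := by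
  rcases ha.eq_or_lt with h | h
  · rcases hb.eq_or_lt with h' | h'
    · simp [← h, ← h']
    · simp [← h]
  · rcases hb.eq_or_lt with h' | h'
    · simp [← h']
    · rw [mul_min_of_nonneg _ _ ha, mul_min_of_nonneg _ _ hb, mul_one, mul_one,
        mul_div_cancel₀ _ h.ne', mul_div_cancel₀ _ h'.ne', min_comm]

/-- Detailed balance of the Metropolis–Hastings kernel with respect to the density `p`:
for all measurable sets `A`, `B`, `∫_A p(u) Q(u, B) dλ(u) = ∫_B p(v) Q(v, A) dλ(v)`. -/
theorem metropolis_hastings_detailed_balance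
    {S : Type*} [MeasurableSpace S]
    (lam : Measure S) [SigmaFinite lam]
    (p : S → ℝ) (q : S → S → ℝ)
    (hpm : Measurable p) (hqm : Measurable (Function.uncurry q))
    (hp0 : ∀ u, 0 ≤ p u) (hq0 : ∀ u v, 0 ≤ q u v)
    (hpint : ∫ u, p u ∂lam = 1)
    (hqint : ∀ u, ∫ v, q u v ∂lam = 1)
    (acc : S → S → ℝ)
    (hacc : ∀ u v, acc u v = min 1 ((p v * q v u) / (p u * q u v)))
    (Q : S → Measure S)
    (hQ : ∀ u, Q u = lam.withDensity (fun v => ENNReal.ofReal (acc u v * q u v))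
        + (1 - ENNReal.ofReal (∫ z, acc u z * q u z ∂lam)) • Measure.dirac u) :
    ∀ A B : Set S, MeasurableSet A → MeasurableSet B →
      ∫ u in A, p u * (Q u B).toReal ∂lam = ∫ v in B, p v * (Q v A).toReal ∂lam := by
  intro A B hA hB
  set f : S → S → ℝ := fun u v => acc u v * q u v with hf
  set r : S → ℝ := fun u => ∫ z, f u z ∂lam with hr
  -- measurability
  have haccm : Measurable (Function.uncurry acc) := by
    have : Function.uncurry acc =
        fun x : S × S => min 1 ((p x.2 * q x.2 x.1) / (p x.1 * q x.1 x.2)) :=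
      funext fun x => hacc x.1 x.2
    rw [this]
    exact measurable_const.min
      (((hpm.comp measurable_snd).mul (hqm.comp measurable_swap)).div
        ((hpm.comp measurable_fst).mul hqm))
  have hfm : Measurable (Function.uncurry f) := haccm.mul hqm
  have hfum : ∀ u, Measurable (f u) := fun u => hfm.comp measurable_prodMk_left
  -- bounds
  have hacc0 : ∀ u v, 0 ≤ acc u v := fun u v => by
    rw [hacc]
    exact le_min zero_le_one (div_nonneg (mul_nonneg (hp0 _) (hq0 _ _))
      (mul_nonneg (hp0 _) (hq0 _ _)))
  have hacc1 : ∀ u v, acc u v ≤ 1 := fun u v => by rw [hacc]; exact min_le_left _ _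
  have hf0 : ∀ u v, 0 ≤ f u v := fun u v => mul_nonneg (hacc0 u v) (hq0 u v)
  have hfq : ∀ u v, f u v ≤ q u v := fun u v =>
    mul_le_of_le_one_left (hq0 u v) (hacc1 u v)
  -- integrability
  have hpInt : Integrable p lam := integrable_of_integral_eq_one hpint
  have hqInt : ∀ u, Integrable (q u) lam := fun u => integrable_of_integral_eq_one (hqint u)
  have hfInt : ∀ u, Integrable (f u) lam := fun u =>
    (hqInt u).mono (hfum u).aestronglyMeasurable
      (ae_of_all _ fun v => by
        rw [Real.norm_eq_abs, Real.norm_eq_abs, abs_of_nonneg (hf0 u v),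
          abs_of_nonneg (hq0 u v)]
        exact hfq u v)
  have hr0 : ∀ u, 0 ≤ r u := fun u => integral_nonneg (hf0 u)
  have hr1 : ∀ u, r u ≤ 1 := fun u => by
    calc r u ≤ ∫ v, q u v ∂lam := integral_mono (hfInt u) (hqInt u) (hfq u)
    _ = 1 := hqint u
  -- set integrals of f are in [0, r u]
  have hsetf_le : ∀ (u) (C : Set S), ∫ v in C, f u v ∂lam ≤ r u := fun u C =>
    setIntegral_le_integral (hfInt u) (ae_of_all _ (hf0 u))
  have hsetf0 : ∀ (u) (C : Set S), 0 ≤ ∫ v in C, f u v ∂lam := fun u C =>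
    integral_nonneg (hf0 u)
  -- Q applied to measurable sets
  have hQapp : ∀ (u : S) (C : Set S), MeasurableSet C →
      (Q u C).toReal = (∫ v in C, f u v ∂lam) + Set.indicator C (fun u => 1 - r u) u := by
    intro u C hC
    rw [hQ u, Measure.add_apply, withDensity_apply _ hC, Measure.smul_apply,
      Measure.dirac_apply' _ hC, smul_eq_mul]
    have h1 : ∫⁻ v in C, ENNReal.ofReal (f u v) ∂lam
        = ENNReal.ofReal (∫ v in C, f u v ∂lam) :=
      (ofReal_integral_eq_lintegral_ofReal ((hfInt u).restrict)
        (ae_of_all _ (hf0 u))).symm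
    have h2 : (1 : ENNReal) - ENNReal.ofReal (r u) = ENNReal.ofReal (1 - r u) := by
      rw [ENNReal.ofReal_sub _ (hr0 u), ENNReal.ofReal_one]
    rw [h1, h2]
    by_cases huC : u ∈ C
    · simp only [Set.indicator_of_mem huC, Set.mem_setOf_eq, huC, if_true, Pi.one_apply]
      rw [mul_one, ← ENNReal.ofReal_add (hsetf0 u C) (by linarith [hr1 u]),
        ENNReal.toReal_ofReal (by nlinarith [hsetf0 u C, hr1 u])]
    · simp only [Set.indicator_of_notMem huC, Set.mem_setOf_eq, huC, if_false]
      rw [mul_zero, add_zero, add_zero, ENNReal.toReal_ofReal (hsetf0 u C)]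
  -- the symmetric function G
  set G : S → S → ℝ := fun u v => p u * f u v with hG
  have hGsymm : ∀ u v, G u v = G v u := by
    intro u v
    simp only [hG, hf, hacc]
    rw [show p u * (min 1 (p v * q v u / (p u * q u v)) * q u v)
        = (p u * q u v) * min 1 ((p v * q v u) / (p u * q u v)) by ring,
      show p v * (min 1 (p u * q u v / (p v * q v u)) * q v u)
        = (p v * q v u) * min 1 ((p u * q u v) / (p v * q v u)) by ring]
    exact mh_min_symm _ _ (mul_nonneg (hp0 u) (hq0 u v)) (mul_nonneg (hp0 v) (hq0 v u))
  have hGm : Measurable (Function.uncurry G) := (hpm.comp measurable_fst).mul hfm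
  have hG0 : ∀ u v, 0 ≤ G u v := fun u v => mul_nonneg (hp0 u) (hf0 u v)
  -- the swap identity for the absolutely continuous part
  have hswap : ∀ (C D : Set S), MeasurableSet C → MeasurableSet D →
      ∫ u in C, p u * ∫ v in D, f u v ∂lam ∂lam
        = (∫⁻ u in C, ∫⁻ v in D, ENNReal.ofReal (G u v) ∂lam ∂lam).toReal := by
    intro C D hC hD
    have hint : ∀ u : S, p u * ∫ v in D, f u v ∂lam = ∫ v in D, G u v ∂lam := by
      intro u; rw [integral_const_mul]
    simp_rw [hint]
    have hmeas : AEStronglyMeasurable (fun u => ∫ v in D, G u v ∂lam) (lam.restrict C) := by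
      have : StronglyMeasurable fun u => ∫ v, (Function.uncurry G) (u, v) ∂(lam.restrict D) :=
        hGm.stronglyMeasurable.integral_prod_right'
      exact this.aestronglyMeasurable
    rw [integral_eq_lintegral_of_nonneg_ae
      (ae_of_all _ fun u => integral_nonneg (hG0 u))
      hmeas]
    congr 1
    refine lintegral_congr fun u => ?_
    exact ofReal_integral_eq_lintegral_ofReal
      (((hfInt u).const_mul (p u)).restrict) (ae_of_all _ (hG0 u))
  -- rewrite the integrands on both sides
  have hintegrand : ∀ (C : Set S), MeasurableSet C → ∀ u : S,
      p u * (Q u C).toReal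
        = p u * ∫ v in C, f u v ∂lam + Set.indicator C (fun u => p u * (1 - r u)) u := by
    intro C hC u
    rw [hQapp u C hC, mul_add]
    congr 1
    by_cases huC : u ∈ C
    · rw [Set.indicator_of_mem huC, Set.indicator_of_mem huC]
    · rw [Set.indicator_of_notMem huC, Set.indicator_of_notMem huC, mul_zero]
  -- integrability of the two pieces
  have hrm : StronglyMeasurable r := by
    have : StronglyMeasurable fun u => ∫ v, (Function.uncurry f) (u, v) ∂lam :=
      hfm.stronglyMeasurable.integral_prod_right'
    exact this
  have hterm1Int : ∀ (C D : Set S), MeasurableSet D →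
      Integrable (fun u => p u * ∫ v in D, f u v ∂lam) (lam.restrict C) := by
    intro C D hD
    refine (hpInt.restrict.mono ?_ (ae_of_all _ fun u => ?_))
    · have : StronglyMeasurable fun u => ∫ v, (Function.uncurry f) (u, v) ∂(lam.restrict D) :=
        hfm.stronglyMeasurable.integral_prod_right'
      exact (hpm.aestronglyMeasurable.mul this.aestronglyMeasurable)
    · rw [Real.norm_eq_abs, Real.norm_eq_abs, abs_of_nonneg (hp0 u),
        abs_of_nonneg (mul_nonneg (hp0 u) (hsetf0 u D))]
      nlinarith [hsetf0 u D, hsetf_le u D, hr1 u, hp0 u]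
  have hterm2Int : ∀ (C D : Set S), MeasurableSet D →
      Integrable (fun u => Set.indicator D (fun u => p u * (1 - r u)) u) (lam.restrict C) := by
    intro C D hD
    refine (hpInt.restrict.mono ?_ (ae_of_all _ fun u => ?_))
    · exact ((hpm.aestronglyMeasurable.mul
        ((stronglyMeasurable_const.sub hrm).aestronglyMeasurable)).indicator hD)
    · rw [Real.norm_eq_abs, Real.norm_eq_abs, abs_of_nonneg (hp0 u)]
      by_cases huD : u ∈ D
      · rw [Set.indicator_of_mem huD, abs_of_nonneg (mul_nonneg (hp0 u) (by linarith [hr1 u]))]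
        nlinarith [hr0 u, hr1 u, hp0 u]
      · rw [Set.indicator_of_notMem huD, abs_zero]; exact hp0 u
  -- put everything together
  rw [integral_congr_ae (ae_of_all _ (hintegrand B hB)),
    integral_congr_ae (ae_of_all _ (hintegrand A hA)),
    integral_add (hterm1Int A B hB) (hterm2Int A B hB),
    integral_add (hterm1Int B A hA) (hterm2Int B A hA)]
  congr 1
  · -- absolutely continuous parts
    rw [hswap A B hA hB, hswap B A hB hA]
    congr 1
    rw [lintegral_lintegral_swap]
    · exact lintegral_congr fun v => lintegral_congr fun u => by rw [hGsymm u v]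
    · exact (ENNReal.measurable_ofReal.comp hGm).aemeasurable
  · -- singular parts
    rw [setIntegral_indicator hB, setIntegral_indicator hA, Set.inter_comm]
end

section
/- If a Markov transition kernel Q₁ on a measurable space S satisfies detailed balance with respect to a probability measure π₁ proportional to exp(-R(u)) μ₀(du), and the second-stage Metropolis kernel with acceptance probability acc_Φ(u,v) = min{1, exp(-(Φ(v) - Φ(u)))} is applied to proposals drawn from Q₁, then the composite kernel Q(u, dv) = acc_Φ(u,v) Q₁(u, dv) + δ_u(dv)(1 - ∫ acc_Φ(u,z) Q₁(u, dz)) satisfies detailed balance with respect to the measure μ^y proportional to exp(-Φ(u) - R(u)) μ₀(du). -/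
/-!
Reversibility of the proposal `Q₁` with respect to `π₁` says that the flow measure `π₁ ⊗ Q₁`
on `S × S` is invariant under swapping coordinates. Since `μ^y` has density proportional to
`exp(-Φ)` with respect to `π₁`, the accepted part of the flow from `A` to `B` under `Q` is the
integral over `A × B` of `exp(-Φ u) * min 1 (exp(Φ u - Φ v)) = min (exp(-Φ u)) (exp(-Φ v))`
against `π₁ ⊗ Q₁`, which is symmetric in `u` and `v`. The rejected part contributes the same
integral over `A ∩ B` in both directions.
-/

open MeasureTheory ProbabilityTheory Set
open scoped ENNReal

namespace ProbabilityTheory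

variable {α : Type*} [MeasurableSpace α]

theorem Kernel.IsReversible.map_swap_compProd {κ : Kernel α α} [IsFiniteKernel κ]
    {π : Measure α} [SigmaFinite π] (hκ : κ.IsReversible π) :
    (π ⊗ₘ κ).map Prod.swap = π ⊗ₘ κ := by
  symm
  refine Measure.ext_of_generateFrom_of_iUnion _ (fun n => spanningSets π n ×ˢ univ)
    generateFrom_prod.symm isPiSystem_prod ?_
    (fun n => mem_image2_of_mem (measurableSet_spanningSets π n) .univ) ?_ ?_
  · rw [← iUnion_prod_const, iUnion_spanningSets, univ_prod_univ]
  · intro n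
    rw [Measure.compProd_apply_prod (measurableSet_spanningSets π n) .univ]
    refine ne_top_of_le_ne_top ?_ (setLIntegral_mono measurable_const fun u _ =>
      measure_le_bound κ u univ)
    rw [MeasureTheory.setLIntegral_const]
    exact ENNReal.mul_ne_top κ.bound_ne_top (measure_spanningSets_lt_top π n).ne
  · rintro _ ⟨A, hA, B, hB, rfl⟩
    rw [Measure.map_apply measurable_swap (hA.prod hB), preimage_swap_prod,
      Measure.compProd_apply_prod hA hB, Measure.compProd_apply_prod hB hA]
    exact hκ hA hB

variable {κ : Kernel α α} {a : α → α → ℝ≥0∞}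

noncomputable def metropolisMeasure (κ : Kernel α α) (a : α → α → ℝ≥0∞) (u : α) : Measure α :=
  (κ u).withDensity (a u) + (1 - ∫⁻ z, a u z ∂κ u) • Measure.dirac u

theorem metropolisMeasure_apply (u : α) {B : Set α} (hB : MeasurableSet B) :
    metropolisMeasure κ a u B =
      ∫⁻ v in B, a u v ∂κ u + B.indicator (fun u => 1 - ∫⁻ z, a u z ∂κ u) u := by
  rw [metropolisMeasure, Measure.add_apply, withDensity_apply _ hB, Measure.smul_apply,
    Measure.dirac_apply' _ hB, smul_eq_mul]
  by_cases hu : u ∈ B <;> simp [hu]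

theorem setLIntegral_metropolisMeasure_apply [IsSFiniteKernel κ]
    (ha : Measurable (Function.uncurry a)) (μ : Measure α) (A : Set α) {B : Set α}
    (hB : MeasurableSet B) :
    ∫⁻ u in A, metropolisMeasure κ a u B ∂μ =
      ∫⁻ u in A, ∫⁻ v in B, a u v ∂κ u ∂μ + ∫⁻ u in A ∩ B, 1 - ∫⁻ z, a u z ∂κ u ∂μ := by
  simp_rw [metropolisMeasure_apply _ hB]
  rw [lintegral_add_left (ha.setLIntegral_kernel_prod_right hB), lintegral_indicator hB,
    Measure.restrict_restrict hB, inter_comm]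

theorem setLIntegral_setLIntegral_withDensity_eq_setLIntegral_compProd
    [IsSFiniteKernel κ] {π : Measure α} [SFinite π] {d : α → ℝ≥0∞} (hd : Measurable d)
    (ha : Measurable (Function.uncurry a)) {A B : Set α}
    (hA : MeasurableSet A) (hB : MeasurableSet B) :
    ∫⁻ u in A, ∫⁻ v in B, a u v ∂κ u ∂(π.withDensity d) =
      ∫⁻ p in A ×ˢ B, d p.1 * a p.1 p.2 ∂(π ⊗ₘ κ) := by
  rw [setLIntegral_withDensity_eq_setLIntegral_mul _ hd
      (ha.setLIntegral_kernel_prod_right hB) hA,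
    Measure.setLIntegral_compProd (f := fun p => d p.1 * a p.1 p.2)
      ((hd.comp measurable_fst).mul ha) hA hB]
  refine setLIntegral_congr_fun hA fun u _ => ?_
  exact (lintegral_const_mul _ (ha.comp measurable_prodMk_left)).symm

theorem setLIntegral_prod_comm_of_map_swap_eq {μ : Measure (α × α)}
    (hμ : μ.map Prod.swap = μ) {f : α × α → ℝ≥0∞} (hf : Measurable f)
    (hf_swap : ∀ p, f p.swap = f p) {A B : Set α} (hA : MeasurableSet A) (hB : MeasurableSet B) :
    ∫⁻ p in A ×ˢ B, f p ∂μ = ∫⁻ p in B ×ˢ A, f p ∂μ := by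
  conv_lhs => rw [← hμ, setLIntegral_map (hA.prod hB) hf measurable_swap, preimage_swap_prod]
  simp_rw [hf_swap]

theorem metropolisMeasure_detailed_balance [IsFiniteKernel κ] {π : Measure α} [SigmaFinite π]
    (hκ : κ.IsReversible π) {d : α → ℝ≥0∞} (hd : Measurable d)
    (ha : Measurable (Function.uncurry a)) (hda : ∀ u v, d u * a u v = d v * a v u)
    {A B : Set α} (hA : MeasurableSet A) (hB : MeasurableSet B) :
    ∫⁻ u in A, metropolisMeasure κ a u B ∂(π.withDensity d) =
      ∫⁻ v in B, metropolisMeasure κ a v A ∂(π.withDensity d) := by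
  rw [setLIntegral_metropolisMeasure_apply ha _ A hB,
    setLIntegral_metropolisMeasure_apply ha _ B hA, inter_comm,
    setLIntegral_setLIntegral_withDensity_eq_setLIntegral_compProd hd ha hA hB,
    setLIntegral_setLIntegral_withDensity_eq_setLIntegral_compProd hd ha hB hA,
    setLIntegral_prod_comm_of_map_swap_eq hκ.map_swap_compProd
      (f := fun p => d p.1 * a p.1 p.2) ((hd.comp measurable_fst).mul ha)
      (fun p => hda p.2 p.1) hA hB]

end ProbabilityTheory

theorem Real.exp_neg_mul_min_one_exp_neg_sub (x y : ℝ) :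
    Real.exp (-x) * min 1 (Real.exp (-(y - x))) = min (Real.exp (-x)) (Real.exp (-y)) := by
  rw [mul_min_of_nonneg _ _ (Real.exp_nonneg _), mul_one, ← Real.exp_add]
  ring_nf

theorem withDensity_ofReal_exp_neg_sub_div_eq {α : Type*} [MeasurableSpace α] (μ : Measure α)
    {Φ R : α → ℝ} (hΦm : Measurable Φ) (hRm : Measurable R) {Z₁ : ℝ} (hZ₁ : 0 < Z₁) (Z : ℝ) :
    μ.withDensity (fun u => ENNReal.ofReal (Real.exp (-(Φ u) - R u) / Z)) =
      (μ.withDensity fun u => ENNReal.ofReal (Real.exp (-(R u)) / Z₁)).withDensity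
        fun u => ENNReal.ofReal (Z₁ / Z * Real.exp (-(Φ u))) := by
  rw [← withDensity_mul _ (by fun_prop) (by fun_prop)]
  congr 1 with u
  rw [Pi.mul_apply, ← ENNReal.ofReal_mul (by positivity), sub_eq_neg_add, Real.exp_add]
  field_simp

theorem splitting_pcn_detailed_balance_general
    {S : Type*} [MeasurableSpace S]
    (μ₀ : Measure S) [IsProbabilityMeasure μ₀]
    (Φ R : S → ℝ) (hΦm : Measurable Φ) (hRm : Measurable R)
    (Z₁ Z : ℝ) (hZ₁pos : 0 < Z₁)
    (π₁ : Measure S)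
    (hπ₁ : π₁ = μ₀.withDensity (fun u => ENNReal.ofReal (Real.exp (-(R u)) / Z₁)))
    (μy : Measure S)
    (hμy : μy = μ₀.withDensity (fun u => ENNReal.ofReal (Real.exp (-(Φ u) - R u) / Z)))
    (Q₁ : S → Measure S)
    (hQ₁m : Measurable Q₁)
    (hQ₁prob : ∀ u, IsProbabilityMeasure (Q₁ u))
    (hQ₁db : ∀ A B : Set S, MeasurableSet A → MeasurableSet B →
      ∫⁻ u in A, Q₁ u B ∂π₁ = ∫⁻ v in B, Q₁ v A ∂π₁)
    (accΦ : S → S → ℝ)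
    (haccΦ : ∀ u v, accΦ u v = min 1 (Real.exp (-(Φ v - Φ u))))
    (Q : S → Measure S)
    (hQ : ∀ u, Q u = (Q₁ u).withDensity (fun v => ENNReal.ofReal (accΦ u v))
        + (1 - ∫⁻ z, ENNReal.ofReal (accΦ u z) ∂(Q₁ u)) • Measure.dirac u) :
    ∀ A B : Set S, MeasurableSet A → MeasurableSet B →
      ∫⁻ u in A, Q u B ∂μy = ∫⁻ v in B, Q v A ∂μy := by
  intro A B hA hB
  obtain rfl : accΦ = fun u v => min 1 (Real.exp (-(Φ v - Φ u))) :=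
    funext fun u => funext (haccΦ u)
  let κ : Kernel S S := ⟨Q₁, hQ₁m⟩
  have : IsMarkovKernel κ := ⟨hQ₁prob⟩
  have : SigmaFinite π₁ := hπ₁ ▸ inferInstance
  have hda (u v : S) : ENNReal.ofReal (Z₁ / Z * Real.exp (-(Φ u))) *
      ENNReal.ofReal (min 1 (Real.exp (-(Φ v - Φ u)))) =
      ENNReal.ofReal (Z₁ / Z * Real.exp (-(Φ v))) *
      ENNReal.ofReal (min 1 (Real.exp (-(Φ u - Φ v)))) := by
    simp only [← ENNReal.ofReal_mul' (le_min zero_le_one (Real.exp_nonneg _)), mul_assoc,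
      Real.exp_neg_mul_min_one_exp_neg_sub]
    rw [min_comm]
  -- after these rewrites `Q` is `metropolisMeasure κ _` up to unfolding
  rw [funext hQ, hμy, withDensity_ofReal_exp_neg_sub_div_eq μ₀ hΦm hRm hZ₁pos, ← hπ₁]
  exact metropolisMeasure_detailed_balance (κ := κ) (hQ₁db · ·) (by fun_prop) (by fun_prop)
    hda hA hB

/-- Detailed balance of the splitting (S-pCN) kernel: if `Q₁` is in detailed balance with
respect to `π₁ ∝ exp(-R) μ₀`, then the composite kernel obtained by accepting proposals of
`Q₁` with probability `min{1, exp(-(Φ v - Φ u))}` is in detailed balance with respect to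
`μ^y ∝ exp(-Φ - R) μ₀`. -/
theorem splitting_pcn_detailed_balance
    {S : Type*} [MeasurableSpace S]
    (μ₀ : Measure S) [IsProbabilityMeasure μ₀]
    (Φ R : S → ℝ) (hΦm : Measurable Φ) (hRm : Measurable R)
    (Z₁ Z : ℝ) (hZ₁pos : 0 < Z₁) (hZpos : 0 < Z)
    (hZ₁ : Z₁ = ∫ u, Real.exp (-(R u)) ∂μ₀)
    (hZ : Z = ∫ u, Real.exp (-(Φ u) - R u) ∂μ₀)
    (π₁ : Measure S)
    (hπ₁ : π₁ = μ₀.withDensity (fun u => ENNReal.ofReal (Real.exp (-(R u)) / Z₁)))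
    (μy : Measure S)
    (hμy : μy = μ₀.withDensity (fun u => ENNReal.ofReal (Real.exp (-(Φ u) - R u) / Z)))
    (Q₁ : S → Measure S)
    (hQ₁m : Measurable Q₁)
    (hQ₁prob : ∀ u, IsProbabilityMeasure (Q₁ u))
    (hQ₁db : ∀ A B : Set S, MeasurableSet A → MeasurableSet B →
      ∫⁻ u in A, Q₁ u B ∂π₁ = ∫⁻ v in B, Q₁ v A ∂π₁)
    (accΦ : S → S → ℝ)
    (haccΦ : ∀ u v, accΦ u v = min 1 (Real.exp (-(Φ v - Φ u))))
    (Q : S → Measure S)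
    (hQ : ∀ u, Q u = (Q₁ u).withDensity (fun v => ENNReal.ofReal (accΦ u v))
        + (1 - ∫⁻ z, ENNReal.ofReal (accΦ u z) ∂(Q₁ u)) • Measure.dirac u) :
    ∀ A B : Set S, MeasurableSet A → MeasurableSet B →
      ∫⁻ u in A, Q u B ∂μy = ∫⁻ v in B, Q v A ∂μy :=
  splitting_pcn_detailed_balance_general μ₀ Φ R hΦm hRm Z₁ Z hZ₁pos π₁ hπ₁ μy hμy Q₁ hQ₁m hQ₁prob
    hQ₁db accΦ haccΦ Q hQ
end
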